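/- Let A ⟶f B ⟶g C ⟶h A⟦1⟧ be a distinguished triangle in C whose connecting morphism h satisfies both condition (Lex) and condition (Rex). If A and B belong to N, then C belongs to N; and if B and C belong to N, then A belongs to N. (Thus N is a thick subcategory of the relative extriangulated structure determined by (Lex) and (Rex).) -/

import Mathlib

open CategoryTheory CategoryTheory.Limits CategoryTheory.Pretriangulated

universe v u v₂ u₂

variable {C : Type u} [Category.{v} C] [Preadditive C] [HasZeroObject C]
  [HasShift C ℤ] [∀ n : ℤ, (shiftFunctor C n).Additive] [Pretriangulated C]

/-- `f : X ⟶ Y` factors through an object of `N`. -/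
def FactorsThru (N : Set C) {X Y : C} (f : X ⟶ Y) : Prop :=
  ∃ (Z : C) (_ : Z ∈ N) (u : X ⟶ Z) (v : Z ⟶ Y), f = u ≫ v

/-- The morphism `X⟦-1⟧ ⟶ A` obtained from `h : X ⟶ A⟦1⟧` by shifting by `-1` and
composing with the canonical isomorphism `A⟦1⟧⟦-1⟧ ≅ A`. -/
noncomputable def descShift {X A : C} (h : X ⟶ A⟦(1:ℤ)⟧) : X⟦(-1:ℤ)⟧ ⟶ A :=
  h⟦(-1:ℤ)⟧' ≫ (shiftEquiv C (1:ℤ)).unitIso.inv.app A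

/-- The class `S_N` of morphisms fitting in a distinguished triangle whose two other
maps factor through `N`. -/
def SN (N : Set C) {B C₀ : C} (g : B ⟶ C₀) : Prop :=
  ∃ (A : C) (f : A ⟶ B) (h : C₀ ⟶ A⟦(1:ℤ)⟧),
    (Triangle.mk f g h ∈ distTriang C) ∧ FactorsThru N f ∧ FactorsThru N h

/-- The class `L`. -/
def ClassL (N : Set C) {A B : C} (f : A ⟶ B) : Prop :=
  ∃ (N₀ : C) (_ : N₀ ∈ N) (g : B ⟶ N₀) (h : N₀ ⟶ A⟦(1:ℤ)⟧),
    (Triangle.mk f g h ∈ distTriang C) ∧ FactorsThru N (descShift h)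

/-- The class `R`. -/
def ClassR (N : Set C) {B C₀ : C} (g : B ⟶ C₀) : Prop :=
  ∃ (N₀ : C) (_ : N₀ ∈ N) (f : N₀ ⟶ B) (h : C₀ ⟶ N₀⟦(1:ℤ)⟧),
    (Triangle.mk f g h ∈ distTriang C) ∧ FactorsThru N h

/-- Condition (Lex) on a morphism `h : C₀ ⟶ A⟦1⟧`. -/
def LexCond (N : Set C) {C₀ A : C} (h : C₀ ⟶ A⟦(1:ℤ)⟧) : Prop :=
  ∀ (N₀ : C), N₀ ∈ N → ∀ (x : N₀ ⟶ C₀), FactorsThru N (descShift (x ≫ h))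

/-- Condition (Rex) on a morphism `h : C₀ ⟶ A⟦1⟧`. -/
def RexCond (N : Set C) {C₀ A : C} (h : C₀ ⟶ A⟦(1:ℤ)⟧) : Prop :=
  ∀ (N₀ : C), N₀ ∈ N → ∀ (y : A ⟶ N₀),
    ∃ (M : C) (_ : M ∈ N) (u : C₀⟦(-1:ℤ)⟧ ⟶ M⟦(-1:ℤ)⟧) (v : M⟦(-1:ℤ)⟧ ⟶ N₀),
      descShift h ≫ y = u ≫ v

/-- `S_N` as a morphism property. -/
def SNProp (N : Set C) : MorphismProperty C := fun _ _ g => SN N g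

/-!
If the middle map `g` of a distinguished triangle `X ⟶ Y ⟶ W ⟶ X⟦1⟧` factors as
`Y ⟶ Z ⟶ W` with `Z ∈ N`, then `W` is a retract of `cone(X ⟶ Z) ⊞ X⟦1⟧`, and dually `Y` is a
retract of `P ⊞ X` with `P` an extension of `Z` by `X`; the splittings come from the long exact
Hom sequences. (Rex) applied to `𝟙 A` says that `h` factors through `N`, which gives `C₀ ∈ N`
from the rotated triangle `B ⟶ C₀ ⟶ A⟦1⟧`; (Lex) applied to `𝟙 C₀` says that `h⟦-1⟧` factors
through `N`, which gives `A ∈ N` from the triangle `B⟦-1⟧ ⟶ C₀⟦-1⟧ ⟶ A`.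
-/

section ThickClosure

variable (N : Set C)

lemma mem_of_comp_add_comp_eq_id
    (hNsum : ∀ ⦃X Z : C⦄ (i : X ⟶ Z) (r : Z ⟶ X), i ≫ r = 𝟙 X → Z ∈ N → X ∈ N)
    (hNext : ∀ (T : Triangle C), (T ∈ distTriang C) → T.obj₁ ∈ N → T.obj₃ ∈ N → T.obj₂ ∈ N)
    {W P Q : C} (i₁ : W ⟶ P) (r₁ : P ⟶ W) (i₂ : W ⟶ Q) (r₂ : Q ⟶ W)
    (hid : i₁ ≫ r₁ + i₂ ≫ r₂ = 𝟙 W) (hP : P ∈ N) (hQ : Q ∈ N) : W ∈ N :=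
  hNsum (biprod.lift i₁ i₂) (biprod.desc r₁ r₂) (by rw [biprod.lift_desc, hid])
    (hNext _ (binaryBiproductTriangle_distinguished P Q) hP hQ)

lemma obj₃_mem_of_factorsThru_mor₂
    (hNsum : ∀ ⦃X Z : C⦄ (i : X ⟶ Z) (r : Z ⟶ X), i ≫ r = 𝟙 X → Z ∈ N → X ∈ N)
    (hNext : ∀ (T : Triangle C), (T ∈ distTriang C) → T.obj₁ ∈ N → T.obj₃ ∈ N → T.obj₂ ∈ N)
    (T : Triangle C) (hT : T ∈ distTriang C) (hmor₂ : FactorsThru N T.mor₂)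
    (hX : T.obj₁⟦(1:ℤ)⟧ ∈ N) : T.obj₃ ∈ N := by
  obtain ⟨Z, hZ, u, v, huv⟩ := hmor₂
  obtain ⟨Y', α, β, hT'⟩ := distinguished_cocone_triangle (T.mor₁ ≫ u)
  have hY' : Y' ∈ N := hNext _ (rot_of_distTriang _ hT') hZ hX
  obtain ⟨φ, hφ⟩ := Triangle.yoneda_exact₂ T hT (u ≫ α) (by
    rw [← Category.assoc]; exact comp_distTriang_mor_zero₁₂ _ hT')
  obtain ⟨ψ : Y' ⟶ T.obj₃, hψ : v = α ≫ ψ⟩ := Triangle.yoneda_exact₂ _ hT' v (by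
    change (T.mor₁ ≫ u) ≫ v = 0
    rw [Category.assoc, ← huv]; exact comp_distTriang_mor_zero₁₂ T hT)
  obtain ⟨ξ, hξ⟩ := Triangle.yoneda_exact₃ T hT (𝟙 T.obj₃ - φ ≫ ψ) (by
    rw [Preadditive.comp_sub, Category.comp_id, ← Category.assoc, ← hφ, Category.assoc, ← hψ,
      ← huv, sub_self])
  exact mem_of_comp_add_comp_eq_id N hNsum hNext φ ψ T.mor₃ ξ
    (by rw [← hξ]; abel) hY' hX

lemma obj₂_mem_of_factorsThru_mor₂
    (hNsum : ∀ ⦃X Z : C⦄ (i : X ⟶ Z) (r : Z ⟶ X), i ≫ r = 𝟙 X → Z ∈ N → X ∈ N)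
    (hNext : ∀ (T : Triangle C), (T ∈ distTriang C) → T.obj₁ ∈ N → T.obj₃ ∈ N → T.obj₂ ∈ N)
    (T : Triangle C) (hT : T ∈ distTriang C) (hmor₂ : FactorsThru N T.mor₂)
    (hX : T.obj₁ ∈ N) : T.obj₂ ∈ N := by
  obtain ⟨Z, hZ, u, v, huv⟩ := hmor₂
  obtain ⟨P, a, b, hT'⟩ := distinguished_cocone_triangle₂ (v ≫ T.mor₃)
  have hP : P ∈ N := hNext _ hT' hX hZ
  obtain ⟨φ : T.obj₂ ⟶ P, hφ : u = φ ≫ b⟩ := Triangle.coyoneda_exact₃ _ hT' u (by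
    change u ≫ v ≫ T.mor₃ = 0
    rw [← Category.assoc, ← huv]; exact comp_distTriang_mor_zero₂₃ T hT)
  obtain ⟨ψ, hψ⟩ := Triangle.coyoneda_exact₃ T hT (b ≫ v) (by
    rw [Category.assoc]; exact comp_distTriang_mor_zero₂₃ _ hT')
  obtain ⟨ξ, hξ⟩ := Triangle.coyoneda_exact₂ T hT (𝟙 T.obj₂ - φ ≫ ψ) (by
    rw [Preadditive.sub_comp, Category.id_comp, Category.assoc, ← hψ, ← Category.assoc, ← hφ,
      ← huv, sub_self])
  exact mem_of_comp_add_comp_eq_id N hNsum hNext φ ψ ξ T.mor₁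
    (by rw [← hξ]; abel) hP hX

end ThickClosure

lemma exists_comp_eq_of_descShift_eq_comp {C₀ A M : C} (h : C₀ ⟶ A⟦(1:ℤ)⟧)
    (u : C₀⟦(-1:ℤ)⟧ ⟶ M⟦(-1:ℤ)⟧) (v : M⟦(-1:ℤ)⟧ ⟶ A) (huv : descShift h = u ≫ v) :
    ∃ (u' : C₀ ⟶ M) (v' : M ⟶ A⟦(1:ℤ)⟧), h = u' ≫ v' := by
  let F := shiftFunctor C (-1:ℤ)
  refine ⟨F.preimage u,
    F.preimage (v ≫ ((shiftEquiv C (1:ℤ)).unitIso.hom.app A : A ⟶ A⟦(1:ℤ)⟧⟦(-1:ℤ)⟧)), ?_⟩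
  apply F.map_injective
  rw [F.map_comp, F.map_preimage, F.map_preimage]
  simp [F, ← reassoc_of% huv, descShift]

theorem stmt16 (N : Set C)
    (hNiso : ∀ ⦃X Y : C⦄, (X ≅ Y) → X ∈ N → Y ∈ N)
    (hNsum : ∀ ⦃X Z : C⦄ (i : X ⟶ Z) (r : Z ⟶ X), i ≫ r = 𝟙 X → Z ∈ N → X ∈ N)
    (hNext : ∀ (T : Triangle C), (T ∈ distTriang C) → T.obj₁ ∈ N → T.obj₃ ∈ N → T.obj₂ ∈ N)
    {A B C₀ : C} (f : A ⟶ B) (g : B ⟶ C₀) (h : C₀ ⟶ A⟦(1:ℤ)⟧)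
    (hT : Triangle.mk f g h ∈ distTriang C)
    (hLex : LexCond N h) (hRex : RexCond N h) :
    (A ∈ N → B ∈ N → C₀ ∈ N) ∧ (B ∈ N → C₀ ∈ N → A ∈ N) := by
  constructor
  · intro hA hB
    obtain ⟨M, hM, u, v, huv⟩ := hRex A hA (𝟙 A)
    rw [Category.comp_id] at huv
    obtain ⟨u', v', hh⟩ := exists_comp_eq_of_descShift_eq_comp h u v huv
    exact obj₂_mem_of_factorsThru_mor₂ N hNsum hNext _ (rot_of_distTriang _ hT)
      ⟨M, hM, u', v', hh⟩ hB
  · intro hB hC₀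
    obtain ⟨Z, hZ, u, v, huv⟩ := hLex C₀ hC₀ (𝟙 C₀)
    rw [Category.id_comp] at huv
    -- the second morphism of the doubly inverse-rotated triangle is `-descShift h`
    have hmor₂ : FactorsThru N (-descShift h) :=
      ⟨Z, hZ, -u, v, by rw [huv, Preadditive.neg_comp]⟩
    exact obj₃_mem_of_factorsThru_mor₂ N hNsum hNext _
      (inv_rot_of_distTriang _ (inv_rot_of_distTriang _ hT)) hmor₂
      (hNiso ((shiftEquiv' C (-1:ℤ) (1:ℤ) (by omega)).unitIso.app B) hB)
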